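/- For data y ∈ T^N on the circle T = S¹ (with arc-length distance d_T), nonnegative weights w, and α > 0, the minimum of T(x) = α Σ_{n=1}^{N-1} d_T(x_n, x_{n+1}) + Σ_{n=1}^N w_n d_T(x_n, y_n) over all x ∈ T^N equals the minimum over x ∈ V^N, where V = Val(y) ∪ Val(ỹ) is the set of data values together with their antipodal points. -/

import Mathlib

/-!
On the circle a nonnegative combination `s ↦ ∑ⱼ cⱼ d(s, pⱼ)` of distance functions attains its
minimum at one of the `pⱼ`: lifting the `pⱼ` to `(t - π, t + π]` bounds it above by a convex
piecewise linear function on `ℝ` that agrees with it at `t` and is minimised at a lifted `pⱼ`.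

Given any `x`, move the whole level set `{n | xₙ = t}` of a value `t` that is not a data value to a
common value `s`. As a function of `s` the energy is such a combination, whose points are the data
values and the other values of `x`; so `t` can be merged into one of them without increasing the
energy. Iterating, every `x` is beaten by some `z` with values among the `yₙ`, and the best of these
finitely many candidates is a global minimizer.
-/

open Finset

/-- Arc-length (geodesic) distance on the circle `S¹ = ℝ/2πℤ`. -/
noncomputable def arcDist (a b : Real.Angle) : ℝ := |(a - b).toReal|

/-- The univariate `L¹`-TV functional for circle-valued data. -/
noncomputable def l1tvCirc (N : ℕ) (α : ℝ) (w : Fin N → ℝ) (y : Fin N → Real.Angle)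
    (x : Fin N → Real.Angle) : ℝ :=
  α * ∑ i : Fin (N - 1),
      arcDist (x ⟨i, by have := i.isLt; omega⟩) (x ⟨(i : ℕ) + 1, by have := i.isLt; omega⟩) +
    ∑ n, w n * arcDist (x n) (y n)

namespace Real.Angle

theorem abs_toReal_coe_le_abs (r : ℝ) : |(r : Angle).toReal| ≤ |r| := by
  by_cases hr : π < |r|
  · exact (abs_toReal_le_pi _).trans hr.le
  push Not at hr
  rcases le_or_gt 0 r with h0 | h0
  · rw [abs_toReal_coe_eq_self_iff.mpr ⟨h0, (le_abs_self r).trans hr⟩]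
    exact le_abs_self r
  · have : (r : Angle) = -((-r : ℝ) : Angle) := by rw [coe_neg, neg_neg]
    rw [this, abs_toReal_neg_coe_eq_self_iff.mpr ⟨by linarith, (neg_le_abs r).trans hr⟩]
    exact neg_le_abs r

end Real.Angle

theorem arcDist_comm (a b : Real.Angle) : arcDist a b = arcDist b a := by
  rw [arcDist, arcDist, ← neg_sub, Real.Angle.abs_toReal_neg]

@[simp]
theorem arcDist_self (a : Real.Angle) : arcDist a a = 0 := by
  simp [arcDist]

theorem arcDist_le_abs_of_coe_eq {a b : Real.Angle} {r : ℝ} (h : (r : Real.Angle) = a - b) :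
    arcDist a b ≤ |r| := by
  rw [arcDist, ← h]
  exact Real.Angle.abs_toReal_coe_le_abs r

theorem abs_sub_eq_interpolation {a b u r : ℝ} (hau : a ≤ u) (hub : u ≤ b) (hr : r ≤ a ∨ b ≤ r) :
    (b - a) * |u - r| = (b - u) * |a - r| + (u - a) * |b - r| := by
  rcases hr with hr | hr
  · rw [abs_of_nonneg (by linarith : 0 ≤ u - r), abs_of_nonneg (by linarith : 0 ≤ a - r),
      abs_of_nonneg (by linarith : 0 ≤ b - r)]
    ring
  · rw [abs_of_nonpos (by linarith : u - r ≤ 0), abs_of_nonpos (by linarith : a - r ≤ 0),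
      abs_of_nonpos (by linarith : b - r ≤ 0)]
    ring

theorem exists_sum_mul_abs_sub_le {ι : Type*} [Fintype ι] [Nonempty ι] {c : ι → ℝ}
    (hc : ∀ j, 0 ≤ c j) (r : ι → ℝ) (u : ℝ) :
    ∃ i, ∑ j, c j * |r i - r j| ≤ ∑ j, c j * |u - r j| := by
  classical
  set φ : ℝ → ℝ := fun v => ∑ j, c j * |v - r j| with hφ
  have closer : ∀ v, (∀ j, r j ≤ v ∧ v ≤ u ∨ u ≤ v ∧ v ≤ r j) → φ v ≤ φ u := fun v hv =>
    sum_le_sum fun j _ => mul_le_mul_of_nonneg_left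
      (by rcases hv j with h | h <;> rw [abs_le] <;> constructor <;> cases abs_cases (u - r j) <;>
        linarith) (hc j)
  by_cases hbelow : ∃ j, r j ≤ u
  · obtain ⟨ia, hia, hmax⟩ := exists_max_image (univ.filter (r · ≤ u)) r
      (hbelow.imp fun j hj => by simpa using hj)
    replace hia : r ia ≤ u := (mem_filter.mp hia).2
    by_cases habove : ∃ j, u ≤ r j
    · obtain ⟨ib, hib, hmin⟩ := exists_min_image (univ.filter (u ≤ r ·)) r
        (habove.imp fun j hj => by simpa using hj)
      replace hib : u ≤ r ib := (mem_filter.mp hib).2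
      have gap : ∀ j, r j ≤ r ia ∨ r ib ≤ r j := fun j => by
        rcases le_total (r j) u with h | h
        · exact .inl (hmax j (by simpa using h))
        · exact .inr (hmin j (by simpa using h))
      have interpolation : (r ib - r ia) * φ u = (r ib - u) * φ (r ia) + (u - r ia) * φ (r ib) := by
        simp only [hφ, mul_sum, ← sum_add_distrib]
        refine sum_congr rfl fun j _ => ?_
        linear_combination c j * abs_sub_eq_interpolation hia hib (gap j)
      by_contra! h
      have ha : φ u < φ (r ia) := h ia
      have hb : φ u < φ (r ib) := h ib
      rcases hia.eq_or_lt with hua | hlt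
      · exact (hua ▸ ha).false
      · nlinarith [mul_pos (sub_pos.2 hlt) (sub_pos.2 hb),
          mul_nonneg (sub_nonneg.2 hib) (sub_pos.2 ha).le]
    · push Not at habove
      exact ⟨ia, closer _ fun j => .inl ⟨hmax j (by simpa using (habove j).le), hia⟩⟩
  · push Not at hbelow
    obtain ⟨ib, -, hmin⟩ := exists_min_image univ r univ_nonempty
    exact ⟨ib, closer _ fun j => .inr ⟨(hbelow ib).le, hmin j (mem_univ j)⟩⟩

def IsWeightedDistSum (P : Set Real.Angle) (g : Real.Angle → ℝ) : Prop :=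
  ∃ (C : ℝ) (ι : Type) (_ : Fintype ι) (c : ι → ℝ) (p : ι → Real.Angle),
    (∀ i, 0 ≤ c i) ∧ (∀ i, p i ∈ P) ∧ g = fun s => C + ∑ i, c i * arcDist s (p i)

namespace IsWeightedDistSum

variable {P : Set Real.Angle} {f g : Real.Angle → ℝ}

theorem const (C : ℝ) : IsWeightedDistSum P fun _ => C :=
  ⟨C, Empty, inferInstance, Empty.elim, Empty.elim, Empty.rec, Empty.rec, by simp⟩

theorem arcDist_left {p : Real.Angle} (hp : p ∈ P) : IsWeightedDistSum P fun s => arcDist s p :=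
  ⟨0, Unit, inferInstance, fun _ => 1, fun _ => p, fun _ => zero_le_one, fun _ => hp, by simp⟩

theorem add (hf : IsWeightedDistSum P f) (hg : IsWeightedDistSum P g) :
    IsWeightedDistSum P (f + g) := by
  obtain ⟨C, ι, _, c, p, hc, hp, rfl⟩ := hf
  obtain ⟨D, κ, _, d, q, hd, hq, rfl⟩ := hg
  refine ⟨C + D, ι ⊕ κ, inferInstance, Sum.elim c d, Sum.elim p q, Sum.forall.2 ⟨hc, hd⟩,
    Sum.forall.2 ⟨hp, hq⟩, ?_⟩
  ext s
  simp only [Pi.add_apply, Fintype.sum_sum_type, Sum.elim_inl, Sum.elim_inr]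
  ring

theorem const_mul (hg : IsWeightedDistSum P g) {a : ℝ} (ha : 0 ≤ a) :
    IsWeightedDistSum P fun s => a * g s := by
  obtain ⟨C, ι, _, c, p, hc, hp, rfl⟩ := hg
  refine ⟨a * C, ι, inferInstance, fun i => a * c i, p, fun i => mul_nonneg ha (hc i), hp, ?_⟩
  ext s
  simp only [mul_add, mul_sum, mul_assoc]

theorem sum {κ : Type*} (t : Finset κ) {g : κ → Real.Angle → ℝ}
    (hg : ∀ k ∈ t, IsWeightedDistSum P (g k)) : IsWeightedDistSum P fun s => ∑ k ∈ t, g k s := by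
  simpa only [← Finset.sum_apply] using
    Finset.sum_induction g (IsWeightedDistSum P) (fun _ _ => add) (const 0) hg

theorem exists_mem_le (hg : IsWeightedDistSum P g) (hP : P.Nonempty) (t : Real.Angle) :
    ∃ s ∈ P, g s ≤ g t := by
  obtain ⟨C, ι, _, c, p, hc, hp, rfl⟩ := hg
  cases isEmpty_or_nonempty ι
  · exact ⟨hP.some, hP.some_mem, by simp⟩
  set r : ι → ℝ := fun j => (p j - t).toReal
  obtain ⟨i, hi⟩ := exists_sum_mul_abs_sub_le hc r 0
  refine ⟨p i, hp i, add_le_add_right ?_ C⟩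
  calc ∑ j, c j * arcDist (p i) (p j)
      ≤ ∑ j, c j * |r i - r j| := sum_le_sum fun j _ =>
        mul_le_mul_of_nonneg_left (arcDist_le_abs_of_coe_eq (by simp [r])) (hc j)
    _ ≤ ∑ j, c j * |0 - r j| := hi
    _ = ∑ j, c j * arcDist t (p j) := by simp_rw [arcDist_comm t, zero_sub, abs_neg]; rfl

end IsWeightedDistSum

section MoveLevelSet

variable {ι α : Type*}

open Classical in
noncomputable def moveLevelSet (x : ι → α) (t s : α) : ι → α :=
  fun n => if x n = t then s else x n

theorem moveLevelSet_self (x : ι → α) (t : α) : moveLevelSet x t t = x := by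
  ext n
  by_cases h : x n = t <;> simp [moveLevelSet, h]

theorem moveLevelSet_apply_eq_or {x : ι → α} {t : α} (s : α) (n : ι) :
    moveLevelSet x t s n = s ∨ moveLevelSet x t s n = x n ∧ x n ≠ t := by
  by_cases h : x n = t <;> simp [moveLevelSet, h]

end MoveLevelSet

theorem IsWeightedDistSum.arcDist_moveLevelSet {ι : Type*} {P : Set Real.Angle}
    {x : ι → Real.Angle} {t : Real.Angle} (hx : ∀ n, x n ≠ t → x n ∈ P) (a b : ι) :
    IsWeightedDistSum P fun s => arcDist (moveLevelSet x t s a) (moveLevelSet x t s b) := by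
  by_cases ha : x a = t <;> by_cases hb : x b = t <;>
    simp only [moveLevelSet, ha, hb, if_true, if_false, arcDist_self]
  · exact .const 0
  · exact .arcDist_left (hx b hb)
  · simpa only [arcDist_comm (x a)] using .arcDist_left (hx a ha)
  · exact .const _

theorem IsWeightedDistSum.arcDist_moveLevelSet_left {ι : Type*} {P : Set Real.Angle}
    (x : ι → Real.Angle) (t : Real.Angle) (a : ι) {p : Real.Angle} (hp : p ∈ P) :
    IsWeightedDistSum P fun s => arcDist (moveLevelSet x t s a) p := by
  by_cases ha : x a = t <;> simp only [moveLevelSet, ha, if_true, if_false]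
  · exact .arcDist_left hp
  · exact .const _

theorem exists_forall_mem_le_of_isWeightedDistSum {ι : Type*} [Fintype ι] {S : Finset Real.Angle}
    (hS : S.Nonempty) (F : (ι → Real.Angle) → ℝ)
    (hF : ∀ x t, t ∉ S → IsWeightedDistSum {v | v ∈ S ∨ v ∈ Set.range x ∧ v ≠ t}
      fun s => F (moveLevelSet x t s))
    (x : ι → Real.Angle) : ∃ z, (∀ n, z n ∈ S) ∧ F z ≤ F x := by
  classical
  induction hk : (univ.image x \ S).card using Nat.strong_induction_on generalizing x with
  | _ k ih =>
  by_cases hxS : ∀ n, x n ∈ S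
  · exact ⟨x, hxS, le_rfl⟩
  push Not at hxS
  obtain ⟨n, hn⟩ := hxS
  obtain ⟨s, hsP, hs⟩ := (hF x (x n) hn).exists_mem_le (hS.imp fun _ => .inl) (x n)
  rw [moveLevelSet_self] at hs
  have hsub : univ.image (moveLevelSet x (x n) s) \ S ⊆ (univ.image x \ S).erase (x n) := by
    intro v hv
    simp only [mem_sdiff, mem_image, mem_univ, true_and, mem_erase] at hv ⊢
    obtain ⟨⟨m, rfl⟩, hvS⟩ := hv
    rcases moveLevelSet_apply_eq_or s m with h | ⟨h, hm⟩ <;> rw [h] at hvS ⊢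
    · obtain hsS | ⟨⟨m', rfl⟩, hs'⟩ := hsP
      · exact absurd hsS hvS
      · exact ⟨hs', ⟨m', rfl⟩, hvS⟩
    · exact ⟨hm, ⟨m, rfl⟩, hvS⟩
  have hlt : (univ.image (moveLevelSet x (x n) s) \ S).card < k :=
    hk ▸ (card_le_card hsub).trans_lt (card_erase_lt_of_mem (by simp [hn]))
  obtain ⟨z, hzS, hz⟩ := ih _ hlt _ rfl
  exact ⟨z, hzS, hz.trans hs⟩

theorem exists_forall_le_of_forall_exists_le {ι α : Type*} [Fintype ι] [DecidableEq ι]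
    {S : Finset α} (hS : S.Nonempty) (F : (ι → α) → ℝ)
    (hF : ∀ x, ∃ z, (∀ n, z n ∈ S) ∧ F z ≤ F x) : ∃ x', (∀ n, x' n ∈ S) ∧ ∀ x, F x' ≤ F x := by
  obtain ⟨x', hx', hmin⟩ :=
    (Fintype.piFinset fun _ : ι => S).exists_min_image F (Fintype.piFinset_nonempty.2 fun _ => hS)
  refine ⟨x', Fintype.mem_piFinset.1 hx', fun x => ?_⟩
  obtain ⟨z, hzS, hz⟩ := hF x
  exact (hmin z (Fintype.mem_piFinset.2 hzS)).trans hz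

theorem IsWeightedDistSum.l1tvCirc_moveLevelSet {N : ℕ} {α : ℝ} (hα : 0 ≤ α) {w : Fin N → ℝ}
    (hw : ∀ n, 0 ≤ w n) {y x : Fin N → Real.Angle} {t : Real.Angle} {P : Set Real.Angle}
    (hy : ∀ n, y n ∈ P) (hx : ∀ n, x n ≠ t → x n ∈ P) :
    IsWeightedDistSum P fun s => l1tvCirc N α w y (moveLevelSet x t s) :=
  .add (.const_mul (.sum _ fun _ _ => arcDist_moveLevelSet hx _ _) hα)
    (.sum _ fun n _ => .const_mul (arcDist_moveLevelSet_left x t n (hy n)) (hw n))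

/-- Search-space reduction for circle-valued `L¹`-TV: the minimum over `T^N` equals the
minimum over `V^N` where `V = Val(y) ∪ Val(ỹ)` consists of the data values and their
antipodal points; in particular a global minimizer with values in `V` exists. -/
theorem l1tv_circle_min_attained_on_data_values_and_antipodes
    (N : ℕ) (hN : 1 ≤ N) (y : Fin N → Real.Angle) (w : Fin N → ℝ)
    (hw : ∀ n, 0 ≤ w n) (α : ℝ) (hα : 0 < α) :
    ∃ x' : Fin N → Real.Angle,
      (∀ n, x' n ∈ Set.range y ∪ Set.range (fun i => y i + (Real.pi : Real.Angle))) ∧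
      ∀ x : Fin N → Real.Angle, l1tvCirc N α w y x' ≤ l1tvCirc N α w y x := by
  classical
  set S := univ.image y
  have hS : S.Nonempty := univ_nonempty_iff.2 ⟨⟨0, hN⟩⟩ |>.image y
  have improve := exists_forall_mem_le_of_isWeightedDistSum hS (l1tvCirc N α w y)
    fun x t _ => .l1tvCirc_moveLevelSet hα.le hw (fun n => .inl (mem_image_of_mem y (mem_univ n)))
      fun n h => .inr ⟨⟨n, rfl⟩, h⟩
  obtain ⟨x', hx'S, hmin⟩ := exists_forall_le_of_forall_exists_le hS _ improve
  refine ⟨x', fun n => .inl ?_, hmin⟩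
  simpa [S] using hx'S n
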